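/- arXiv:nlin/0301042 — 8 statements merged into one kernel-verified Lean document; each statement's English description precedes it below -/
import Mathlib

section
/- Let g be a Lie algebra over a field K and let π : g̃ → g be a surjective Lie algebra homomorphism whose kernel is central in g̃ (i.e. g̃ is a central extension of g). If g is quasi-finite, then g̃ is quasi-finite. -/
/-!
Let `h ⊆ g̃` be a subalgebra of finite codimension. The elements `x ∈ h` with `⁅x, g̃⁆ ⊆ h` form a
subalgebra of finite codimension: for `x ∈ h`, the class of `⁅x, y⁆` modulo `h` only depends on the
component of `y` in a finite-dimensional complement of `h`. Its image `S` in `g` has finite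
codimension, so it contains an ideal `I` of finite codimension. As `ker π` is central, `⁅x, y⁆`
only depends on `π x`, so every element of `π⁻¹(I)` brackets `g̃` into `h`; hence `π⁻¹(I) ∩ h` is
an ideal of finite codimension contained in `h`.
-/

/-- A Lie algebra is *quasi-finite* if every Lie subalgebra of finite codimension
contains an ideal of finite codimension. -/
def QuasiFinite (K L : Type*) [Field K] [LieRing L] [LieAlgebra K L] : Prop :=
  ∀ h : LieSubalgebra K L, FiniteDimensional K (L ⧸ h.toSubmodule) →
    ∃ I : LieIdeal K L, (∀ x, x ∈ I → x ∈ h) ∧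
      FiniteDimensional K (L ⧸ (I : LieSubmodule K L L).toSubmodule)

namespace Submodule

variable {R M N : Type*} [Ring R] [AddCommGroup M] [Module R M] [AddCommGroup N] [Module R N]

theorem CoFG.comap [IsNoetherianRing R] {p : Submodule R N} (hp : p.CoFG) (f : M →ₗ[R] N) :
    (p.comap f).CoFG := by
  rw [← p.ker_mkQ, ← LinearMap.ker_comp]
  exact CoFG.ker _

theorem CoFG.map_of_surjective {p : Submodule R M} (hp : p.CoFG) {f : M →ₗ[R] N}
    (hf : Function.Surjective f) : (p.map f).CoFG :=
  Module.Finite.of_surjective (p.mapQ _ f (le_comap_map f p)) <| by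
    rw [← LinearMap.range_eq_top, range_mapQ, LinearMap.range_eq_top.mpr hf, map_top, range_mkQ]

end Submodule

namespace LieSubalgebra

variable {K L : Type*} [Field K] [LieRing L] [LieAlgebra K L] (h : LieSubalgebra K L)

def centralizerMod : LieSubalgebra K L where
  carrier := {x | ∀ y, ⁅x, y⁆ ∈ h}
  zero_mem' _ := by simp [h.zero_mem]
  add_mem' hx hy z := by simpa [add_lie] using h.add_mem (hx z) (hy z)
  smul_mem' t x hx z := by simpa [smul_lie] using h.smul_mem t (hx z)
  lie_mem' hx hy z := by rw [lie_lie]; exact h.sub_mem (hx _) (hy _)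

theorem cofg_inf_centralizerMod (hh : h.toSubmodule.CoFG) :
    (h ⊓ h.centralizerMod).toSubmodule.CoFG := by
  obtain ⟨W, hW⟩ := h.toSubmodule.exists_isCompl
  have : Module.Finite K W := Module.Finite.iff_fg.mpr (hh.fg_of_isCompl hW)
  let Φ : L →ₗ[K] W →ₗ[K] L ⧸ h.toSubmodule :=
    ((LieModule.toEnd K L L : L →ₗ[K] Module.End K L).compl₂ W.subtype).compr₂ h.toSubmodule.mkQ
  refine (hh.inf (Submodule.CoFG.ker Φ)).of_le fun x hx => ?_
  obtain ⟨hxh, hxΦ⟩ := Submodule.mem_inf.mp hx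
  refine Submodule.mem_inf.mpr ⟨hxh, fun y => ?_⟩
  obtain ⟨a, ha, w, hw, rfl⟩ := Submodule.mem_sup.mp (hW.sup_eq_top ▸ Submodule.mem_top (x := y))
  have hxw : ⁅x, w⁆ ∈ h := by
    simpa [Φ] using LinearMap.congr_fun (LinearMap.mem_ker.mp hxΦ) ⟨w, hw⟩
  rw [lie_add]
  exact h.add_mem (h.lie_mem hxh ha) hxw

theorem exists_lieIdeal_le_of_le_centralizerMod (hh : h.toSubmodule.CoFG) (I : LieIdeal K L)
    (hI : ∀ x ∈ I, x ∈ h.centralizerMod) (hIfin : (I : Submodule K L).CoFG) :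
    ∃ J : LieIdeal K L, (∀ x, x ∈ J → x ∈ h) ∧ (J : Submodule K L).CoFG :=
  ⟨{ toSubmodule := (I : Submodule K L) ⊓ h.toSubmodule
     lie_mem := fun {x m} ⟨hmI, hmh⟩ =>
      ⟨I.lie_mem hmI, by rw [← lie_skew]; exact h.toSubmodule.neg_mem (hI m hmI x)⟩ },
    fun _ hx => hx.2, hIfin.inf hh⟩

end LieSubalgebra

section CentralExtension

variable {K g gE : Type*} [Field K] [LieRing g] [LieAlgebra K g] [LieRing gE] [LieAlgebra K gE]
  {π : gE →ₗ⁅K⁆ g}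

theorem LieHom.lie_eq_of_map_eq (hcentral : ∀ x ∈ π.ker, ∀ y : gE, ⁅x, y⁆ = 0) {x x' : gE}
    (hx : π x = π x') (y : gE) : ⁅x, y⁆ = ⁅x', y⁆ := by
  rw [← sub_eq_zero, ← sub_lie]
  exact hcentral _ (by simp [hx]) y

theorem LieSubalgebra.mem_centralizerMod_of_map_mem
    (hcentral : ∀ x ∈ π.ker, ∀ y : gE, ⁅x, y⁆ = 0) (h : LieSubalgebra K gE) {x : gE}
    (hx : π x ∈ h.centralizerMod.map π) : x ∈ h.centralizerMod := by
  obtain ⟨x', hx', hxx'⟩ := (LieSubalgebra.mem_map _ _ _).mp hx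
  intro y
  rw [LieHom.lie_eq_of_map_eq hcentral hxx'.symm]
  exact hx' y

end CentralExtension

/-- A central extension of a quasi-finite Lie algebra is quasi-finite. -/
theorem quasiFinite_of_centralExtension
    (K : Type*) [Field K]
    (g : Type*) [LieRing g] [LieAlgebra K g]
    (gE : Type*) [LieRing gE] [LieAlgebra K gE]
    (π : gE →ₗ⁅K⁆ g) (hsurj : Function.Surjective π)
    (hcentral : ∀ x ∈ π.ker, ∀ y : gE, ⁅x, y⁆ = 0)
    (hg : QuasiFinite K g) :
    QuasiFinite K gE := by
  intro h hh
  obtain ⟨I, hIS, hI⟩ := hg ((h ⊓ h.centralizerMod).map π)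
    ((h.cofg_inf_centralizerMod hh).map_of_surjective (f := π.toLinearMap) hsurj)
  refine h.exists_lieIdeal_le_of_le_centralizerMod hh (LieIdeal.comap π I) (fun x hx => ?_)
    (Submodule.CoFG.comap hI π.toLinearMap)
  exact h.mem_centralizerMod_of_map_mem hcentral
    ((LieSubalgebra.gc_map_comap (f := π)).monotone_l inf_le_right (hIS _ hx))
end

section
/- Let g be a finite-dimensional semisimple Lie algebra over a field K of characteristic zero and let A be a commutative associative K-algebra. Then the Lie algebra g ⊗ A, with bracket [g₁⊗a₁, g₂⊗a₂] = [g₁,g₂] ⊗ a₁a₂, is quasi-finite. -/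
open scoped TensorProduct

/-- The current Lie algebra `g ⊗ A` (realized as `A ⊗[K] g`, with bracket
`[g₁ ⊗ a₁, g₂ ⊗ a₂] = [g₁, g₂] ⊗ a₁a₂`) is a Lie algebra over `K`. -/
noncomputable instance tensorLieAlgebra {K A L : Type*} [Field K] [CommRing A] [Algebra K A]
    [LieRing L] [LieAlgebra K L] : LieAlgebra K (A ⊗[K] L) where
  lie_smul t x y := by
    rw [← algebraMap_smul A t y, lie_smul, algebraMap_smul]

/-- A quotient by the kernel of a map into a finite-dimensional space is
finite-dimensional. -/
lemma QuasiFiniteAux.fd_quot_ker {K M N : Type*} [Field K] [AddCommGroup M] [Module K M]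
    [AddCommGroup N] [Module K N] [FiniteDimensional K N] (f : M →ₗ[K] N) :
    FiniteDimensional K (M ⧸ LinearMap.ker f) :=
  LinearEquiv.finiteDimensional f.quotKerEquivRange.symm

/-- If `p ≤ q` and `M ⧸ p` is finite-dimensional, then so is `M ⧸ q`. -/
lemma QuasiFiniteAux.fd_quot_of_le {K M : Type*} [Field K] [AddCommGroup M] [Module K M]
    {p q : Submodule K M} (hpq : p ≤ q) [FiniteDimensional K (M ⧸ p)] :
    FiniteDimensional K (M ⧸ q) := by
  refine Module.Finite.of_surjective (p.mapQ q LinearMap.id hpq) ?_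
  intro x
  obtain ⟨a, rfl⟩ := q.mkQ_surjective x
  exact ⟨p.mkQ a, by simp [Submodule.mapQ_apply]⟩

/-- A finite-codimension submodule admits a finite "complementary" spanning family. -/
lemma QuasiFiniteAux.exists_fin_compl {K M : Type*} [Field K] [AddCommGroup M] [Module K M]
    (p : Submodule K M) [FiniteDimensional K (M ⧸ p)] :
    ∃ (n : ℕ) (c : Fin n → M), p ⊔ Submodule.span K (Set.range c) = ⊤ := by
  obtain ⟨n, s, hs⟩ := Module.Finite.exists_fin (R := K) (M := M ⧸ p)
  choose c hc using fun i => p.mkQ_surjective (s i)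
  refine ⟨n, c, ?_⟩
  have hmap : Submodule.map p.mkQ (Submodule.span K (Set.range c)) = ⊤ := by
    rw [Submodule.map_span, ← Set.range_comp]
    have : p.mkQ ∘ c = s := funext hc
    rw [this, hs]
  have := congrArg (Submodule.comap p.mkQ) hmap
  rw [Submodule.comap_map_eq, Submodule.ker_mkQ] at this
  have htop : Submodule.comap p.mkQ ⊤ = ⊤ := Submodule.comap_top _
  rw [htop] at this
  rw [sup_comm, this]

/-- A semisimple Lie algebra is perfect: the linear span of brackets is everything. -/
lemma QuasiFiniteAux.perfect_span (K g : Type*) [Field K] [LieRing g] [LieAlgebra K g]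
    [LieAlgebra.IsSemisimple K g] :
    Submodule.span K
      {m : g | ∃ x ∈ (⊤ : LieIdeal K g), ∃ n ∈ (⊤ : LieIdeal K g), ⁅x, n⁆ = m} = ⊤ := by
  rw [← LieSubmodule.lieIdeal_oper_eq_linear_span']
  suffices h : (⁅(⊤ : LieIdeal K g), (⊤ : LieIdeal K g)⁆ : LieIdeal K g) = ⊤ by
    rw [h]; rfl
  set D : LieIdeal K g := ⁅(⊤ : LieIdeal K g), (⊤ : LieIdeal K g)⁆ with hD
  have h1 : ⁅Dᶜ, Dᶜ⁆ ≤ D := LieSubmodule.mono_lie le_top le_top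
  have h2 : ⁅Dᶜ, Dᶜ⁆ ≤ Dᶜ := LieSubmodule.lie_le_right _ _
  have h3 : (⁅Dᶜ, Dᶜ⁆ : LieIdeal K g) = ⊥ :=
    le_bot_iff.mp ((le_inf h1 h2).trans (le_of_eq inf_compl_eq_bot))
  have h4 : IsLieAbelian (Dᶜ : LieIdeal K g) :=
    (LieSubmodule.lie_abelian_iff_lie_self_eq_bot _).mpr h3
  have h5 : (Dᶜ : LieIdeal K g) = ⊥ := LieAlgebra.HasTrivialRadical.eq_bot_of_isSolvable _
  exact compl_eq_bot.mp h5

/-- For a finite-dimensional semisimple Lie algebra `g` over a field `K` of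
characteristic zero and a commutative associative `K`-algebra `A`, the current
algebra `g ⊗ A` is quasi-finite. -/
theorem quasiFinite_tensor
    (K : Type*) [Field K] [CharZero K]
    (g : Type*) [LieRing g] [LieAlgebra K g]
    [FiniteDimensional K g] [LieAlgebra.IsSemisimple K g]
    (A : Type*) [CommRing A] [Algebra K A] :
    QuasiFinite K (A ⊗[K] g) := by
  classical
  intro h hfd
  -- The subspace J of A of coefficients whose pure tensors all lie in h.
  let Φ : A →ₗ[K] g →ₗ[K] ((A ⊗[K] g) ⧸ h.toSubmodule) :=
    (TensorProduct.mk K A g).compr₂ h.toSubmodule.mkQ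
  set J : Submodule K A := LinearMap.ker Φ with hJdef
  have memJ : ∀ a : A, a ∈ J ↔ ∀ x : g, a ⊗ₜ[K] x ∈ h.toSubmodule := by
    intro a
    simp [hJdef, Φ, LinearMap.mem_ker, LinearMap.ext_iff, Submodule.Quotient.mk_eq_zero]
  have hJfd : FiniteDimensional K (A ⧸ J) := QuasiFiniteAux.fd_quot_ker Φ
  -- J is closed under multiplication, using perfectness of g.
  have hJmul : ∀ a ∈ J, ∀ b ∈ J, a * b ∈ J := by
    intro a ha b hb
    rw [memJ]
    intro x
    have hx : x ∈ Submodule.span K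
        {m : g | ∃ y ∈ (⊤ : LieIdeal K g), ∃ n ∈ (⊤ : LieIdeal K g), ⁅y, n⁆ = m} := by
      rw [QuasiFiniteAux.perfect_span K g]; trivial
    have hle : Submodule.span K
        {m : g | ∃ y ∈ (⊤ : LieIdeal K g), ∃ n ∈ (⊤ : LieIdeal K g), ⁅y, n⁆ = m}
        ≤ Submodule.comap ((TensorProduct.mk K A g) (a * b)) h.toSubmodule := by
      rw [Submodule.span_le]
      rintro m ⟨y, -, z, -, rfl⟩
      simp only [SetLike.mem_coe, Submodule.mem_comap, TensorProduct.mk_apply]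
      have key : (a * b) ⊗ₜ[K] ⁅y, z⁆ = ⁅a ⊗ₜ[K] y, b ⊗ₜ[K] z⁆ := rfl
      rw [key]
      exact h.lie_mem ((memJ a).mp ha y) ((memJ b).mp hb z)
    exact hle hx
  -- The conductor ideal of J.
  let Ic : Ideal A :=
    { carrier := {a : A | ∀ b : A, a * b ∈ J}
      add_mem' := fun {x y} hx hy b => by
        rw [add_mul]; exact J.add_mem (hx b) (hy b)
      zero_mem' := fun b => by rw [zero_mul]; exact J.zero_mem
      smul_mem' := fun c a ha b => by
        have : c • a * b = a * (c * b) := by rw [smul_eq_mul]; ring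
        rw [this]; exact ha (c * b) }
  have memIc : ∀ a : A, a ∈ Ic ↔ ∀ b : A, a * b ∈ J := fun a => Iff.rfl
  have hIcJ : ∀ a ∈ Ic, a ∈ J := by
    intro a ha
    have := ha 1
    rwa [mul_one] at this
  -- Finite codimension of the conductor.
  obtain ⟨n, c, hc⟩ := QuasiFiniteAux.exists_fin_compl J
  let Ψ : A →ₗ[K] (A ⧸ J) × (Fin n → A ⧸ J) :=
    LinearMap.prod J.mkQ (LinearMap.pi fun i => J.mkQ ∘ₗ LinearMap.mulLeft K (c i))
  have hkerΨ : ∀ a : A, a ∈ LinearMap.ker Ψ ↔ a ∈ J ∧ ∀ i, c i * a ∈ J := by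
    intro a
    simp [Ψ, LinearMap.mem_ker, Prod.ext_iff, funext_iff, Submodule.Quotient.mk_eq_zero]
  have hΨfd : FiniteDimensional K (A ⧸ LinearMap.ker Ψ) := QuasiFiniteAux.fd_quot_ker Ψ
  have hsub : LinearMap.ker Ψ ≤ Submodule.restrictScalars K Ic := by
    intro a ha
    obtain ⟨haJ, hac⟩ := (hkerΨ a).mp ha
    have hmulspan : ∀ dd ∈ Submodule.span K (Set.range c), a * dd ∈ J := by
      intro dd hdd
      induction hdd using Submodule.span_induction with
      | mem z hz =>
        obtain ⟨i, rfl⟩ := hz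
        rw [mul_comm]
        exact hac i
      | zero => rw [mul_zero]; exact J.zero_mem
      | add y z _ _ hy hz => rw [mul_add]; exact J.add_mem hy hz
      | smul k y _ hy => rw [mul_smul_comm]; exact J.smul_mem k hy
    intro b
    have hbmem : b ∈ J ⊔ Submodule.span K (Set.range c) := by rw [hc]; trivial
    rcases Submodule.mem_sup.mp hbmem with ⟨j, hj, d, hd, rfl⟩
    rw [mul_add]
    exact J.add_mem (hJmul a haJ j hj) (hmulspan d hd)
  have hIcfd : FiniteDimensional K (A ⧸ Submodule.restrictScalars K Ic) :=
    QuasiFiniteAux.fd_quot_of_le hsub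
  -- The Lie ideal Ic ⊗ g.
  set S : Submodule K (A ⊗[K] g) :=
    Submodule.span K {z : A ⊗[K] g | ∃ a ∈ Ic, ∃ x : g, a ⊗ₜ[K] x = z} with hSdef
  have hlie : ∀ (y : A ⊗[K] g), ∀ m ∈ S, ⁅y, m⁆ ∈ S := by
    intro y m hm
    induction hm using Submodule.span_induction with
    | mem z hz =>
      obtain ⟨a, ha, x, rfl⟩ := hz
      induction y using TensorProduct.induction_on with
      | zero => rw [zero_lie]; exact S.zero_mem
      | tmul b yg =>
        have key : ⁅b ⊗ₜ[K] yg, a ⊗ₜ[K] x⁆ = (b * a) ⊗ₜ[K] ⁅yg, x⁆ := rfl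
        rw [key]
        exact Submodule.subset_span ⟨b * a, Ic.mul_mem_left b ha, ⁅yg, x⁆, rfl⟩
      | add y₁ y₂ h₁ h₂ => rw [add_lie]; exact S.add_mem h₁ h₂
    | zero => rw [lie_zero]; exact S.zero_mem
    | add m₁ m₂ _ _ h₁ h₂ => rw [lie_add]; exact S.add_mem h₁ h₂
    | smul k m _ hmem => rw [lie_smul]; exact S.smul_mem k hmem
  let I : LieIdeal K (A ⊗[K] g) :=
    { S with lie_mem := fun {y m} hm => hlie y m hm }
  have hIS : (I : LieSubmodule K (A ⊗[K] g) (A ⊗[K] g)).toSubmodule = S := rfl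
  refine ⟨I, ?_, ?_⟩
  · intro z hz
    have hle : S ≤ h.toSubmodule := by
      rw [Submodule.span_le]
      rintro w ⟨a, ha, x, rfl⟩
      exact (memJ a).mp (hIcJ a ha) x
    exact hle hz
  · -- finite codimension of S
    obtain ⟨m, d, hd⟩ := QuasiFiniteAux.exists_fin_compl (Submodule.restrictScalars K Ic)
    obtain ⟨p, e, he⟩ := Module.Finite.exists_fin (R := K) (M := g)
    set T : Submodule K (A ⊗[K] g) :=
      Submodule.span K (Set.range fun ij : Fin m × Fin p => d ij.1 ⊗ₜ[K] e ij.2) with hTdef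
    have hdiT : ∀ (i : Fin m) (x : g), d i ⊗ₜ[K] x ∈ T := by
      intro i x
      have hx : x ∈ Submodule.span K (Set.range e) := by rw [he]; trivial
      induction hx using Submodule.span_induction with
      | mem z hz =>
        obtain ⟨j, rfl⟩ := hz
        exact Submodule.subset_span ⟨(i, j), rfl⟩
      | zero => rw [TensorProduct.tmul_zero]; exact T.zero_mem
      | add y z _ _ hy hz => rw [TensorProduct.tmul_add]; exact T.add_mem hy hz
      | smul k y _ hy => rw [TensorProduct.tmul_smul]; exact T.smul_mem k hy
    have hST : S ⊔ T = ⊤ := by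
      rw [eq_top_iff, ← TensorProduct.span_tmul_eq_top K A g, Submodule.span_le]
      rintro w ⟨a, x, rfl⟩
      have ha : a ∈ Submodule.restrictScalars K Ic ⊔ Submodule.span K (Set.range d) := by
        rw [hd]; trivial
      have hspan_d : ∀ dd ∈ Submodule.span K (Set.range d), dd ⊗ₜ[K] x ∈ T := by
        intro dd hdd
        induction hdd using Submodule.span_induction with
        | mem z hz =>
          obtain ⟨i, rfl⟩ := hz
          exact hdiT i x
        | zero => rw [TensorProduct.zero_tmul]; exact T.zero_mem
        | add y z _ _ hy hz => rw [TensorProduct.add_tmul]; exact T.add_mem hy hz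
        | smul k y _ hy => rw [← TensorProduct.smul_tmul']; exact T.smul_mem k hy
      rcases Submodule.mem_sup.mp ha with ⟨b, hb, dd, hdd, rfl⟩
      rw [SetLike.mem_coe, TensorProduct.add_tmul]
      refine Submodule.add_mem _ ?_ ?_
      · exact Submodule.mem_sup_left (Submodule.subset_span ⟨b, hb, x, rfl⟩)
      · exact Submodule.mem_sup_right (hspan_d dd hdd)
    have h1 : Submodule.map S.mkQ S = ⊥ := by
      rw [← le_bot_iff, Submodule.map_le_iff_le_comap, Submodule.comap_bot, Submodule.ker_mkQ]
    have h2 : (⊤ : Submodule K ((A ⊗[K] g) ⧸ S)) =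
        Submodule.map S.mkQ S ⊔ Submodule.map S.mkQ T := by
      rw [← Submodule.map_sup, hST, Submodule.map_top, Submodule.range_mkQ]
    rw [h1, bot_sup_eq] at h2
    have hTfg : T.FG := Submodule.fg_span (Set.finite_range _)
    have : (⊤ : Submodule K ((A ⊗[K] g) ⧸ S)).FG := by
      rw [h2]; exact Submodule.FG.map _ hTfg
    rw [hIS]
    exact Module.finite_def.mpr this
end

section
/- Let g be a Lie algebra over a field K with [g,g] = g, let A be a commutative associative K-algebra, and let h be a Lie subalgebra of g ⊗ A. Then the set Z = { f ∈ A | g ⊗ f ⊆ h } (i.e. x ⊗ f ∈ h for all x ∈ g) is a (non-unital) subring of A, i.e. it is a K-subspace closed under multiplication. Moreover, if h has finite codimension in g ⊗ A and g is finite-dimensional nonzero, then Z has finite codimension in A. -/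
open scoped TensorProduct

/-- The largest subspace `Z ⊆ A` with `Z ⊗ M ⊆ N`. -/
noncomputable def Submodule.tensorConductor {R A M : Type*} [CommRing R] [AddCommGroup A]
    [Module R A] [AddCommGroup M] [Module R M] (N : Submodule R (A ⊗[R] M)) : Submodule R A :=
  LinearMap.ker (LinearMap.llcomp R M _ _ N.mkQ ∘ₗ TensorProduct.mk R A M)

namespace Submodule

theorem mem_tensorConductor {R A M : Type*} [CommRing R] [AddCommGroup A] [Module R A]
    [AddCommGroup M] [Module R M] {N : Submodule R (A ⊗[R] M)} {f : A} :
    f ∈ N.tensorConductor ↔ ∀ x : M, f ⊗ₜ[R] x ∈ N := by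
  simp [tensorConductor, LinearMap.ext_iff, Quotient.mk_eq_zero]

theorem finiteDimensional_quotient_tensorConductor {K A M : Type*} [Field K] [AddCommGroup A]
    [Module K A] [AddCommGroup M] [Module K M] (N : Submodule K (A ⊗[K] M))
    [FiniteDimensional K M] [FiniteDimensional K ((A ⊗[K] M) ⧸ N)] :
    FiniteDimensional K (A ⧸ N.tensorConductor) :=
  Module.Finite.equiv (LinearMap.quotKerEquivRange _).symm

end Submodule

theorem LieAlgebra.mem_of_forall_lie_mem_of_perfect {K L : Type*} [CommRing K] [LieRing L]
    [LieAlgebra K L] (hperf : ⁅(⊤ : LieIdeal K L), (⊤ : LieIdeal K L)⁆ = ⊤)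
    {p : Submodule K L} (hp : ∀ x y : L, ⁅x, y⁆ ∈ p) (z : L) : z ∈ p := by
  have hz : z ∈ ((⁅(⊤ : LieIdeal K L), (⊤ : LieIdeal K L)⁆ : LieIdeal K L) : Submodule K L) := by
    simp [hperf]
  rw [LieIdeal.toLieSubalgebra_toSubmodule, LieSubmodule.lieIdeal_oper_eq_linear_span'] at hz
  refine Submodule.span_le.mpr ?_ hz
  rintro _ ⟨x, -, y, -, rfl⟩
  exact hp x y

theorem LieSubalgebra.mul_mem_tensorConductor {K A L : Type*} [Field K] [CommRing A]
    [Algebra K A] [LieRing L] [LieAlgebra K L]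
    (hperf : ⁅(⊤ : LieIdeal K L), (⊤ : LieIdeal K L)⁆ = ⊤) (h : LieSubalgebra K (A ⊗[K] L))
    {f f' : A} (hf : f ∈ h.toSubmodule.tensorConductor)
    (hf' : f' ∈ h.toSubmodule.tensorConductor) : f * f' ∈ h.toSubmodule.tensorConductor := by
  rw [Submodule.mem_tensorConductor] at hf hf' ⊢
  intro z
  refine LieAlgebra.mem_of_forall_lie_mem_of_perfect (K := K)
    (p := h.toSubmodule.comap (TensorProduct.mk K A L (f * f'))) hperf (fun x y => ?_) z
  rw [Submodule.mem_comap, TensorProduct.mk_apply, ← LieAlgebra.ExtendScalars.bracket_tmul]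
  exact h.lie_mem (hf x) (hf' y)

/-- Let `g` be a Lie algebra with `[g,g] = g`, `A` a commutative associative
`K`-algebra, and `h` a Lie subalgebra of `g ⊗ A`.  Then
`Z = { f ∈ A | g ⊗ f ⊆ h }` is a `K`-subspace of `A` closed under multiplication;
moreover if `h` has finite codimension and `g` is finite-dimensional and nonzero,
then `Z` has finite codimension in `A`. -/
theorem subring_of_subalgebra_tensor
    (K : Type*) [Field K]
    (g : Type*) [LieRing g] [LieAlgebra K g]
    (hperf : ⁅(⊤ : LieIdeal K g), (⊤ : LieIdeal K g)⁆ = ⊤)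
    (A : Type*) [CommRing A] [Algebra K A]
    (h : LieSubalgebra K (A ⊗[K] g)) :
    ∃ Z : Submodule K A,
      (∀ f : A, f ∈ Z ↔ ∀ x : g, f ⊗ₜ[K] x ∈ h) ∧
      (∀ f ∈ Z, ∀ f' ∈ Z, f * f' ∈ Z) ∧
      (FiniteDimensional K ((A ⊗[K] g) ⧸ h.toSubmodule) →
        FiniteDimensional K g → Nontrivial g →
        FiniteDimensional K (A ⧸ Z)) :=
  ⟨h.toSubmodule.tensorConductor, fun _ => Submodule.mem_tensorConductor,
    fun _ hf _ hf' => h.mul_mem_tensorConductor hperf hf hf',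
    fun _ _ _ => h.toSubmodule.finiteDimensional_quotient_tensorConductor⟩
end

section
/- Let A be a commutative associative algebra over a field K and let Z ⊆ A be a K-subspace of finite codimension that is closed under multiplication (a non-unital subring). Then Z' = { f ∈ Z | fA ⊆ Z } is an ideal of A of finite codimension. -/
/-- If `Z` is a `K`-subspace of finite codimension of a commutative associative
`K`-algebra `A` that is closed under multiplication, then
`Z' = { f ∈ Z | fA ⊆ Z }` is an ideal of `A` of finite codimension. -/
theorem ideal_of_finiteCodim_subring
    (K : Type*) [Field K]
    (A : Type*) [CommRing A] [Algebra K A]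
    (Z : Submodule K A)
    (hcodim : FiniteDimensional K (A ⧸ Z))
    (hmul : ∀ f ∈ Z, ∀ f' ∈ Z, f * f' ∈ Z) :
    ∃ I : Ideal A,
      (I : Set A) = {f : A | f ∈ Z ∧ ∀ a : A, f * a ∈ Z} ∧
      FiniteDimensional K (A ⧸ I.restrictScalars K) := by
  -- the ideal
  refine ⟨{ carrier := {f : A | f ∈ Z ∧ ∀ a : A, f * a ∈ Z}
            zero_mem' := ⟨Z.zero_mem, fun a => by simp [Z.zero_mem]⟩
            add_mem' := fun {x y} hx hy =>
              ⟨Z.add_mem hx.1 hy.1, fun a => by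
                rw [add_mul]; exact Z.add_mem (hx.2 a) (hy.2 a)⟩
            smul_mem' := fun c {x} hx =>
              ⟨by simpa [mul_comm] using hx.2 c, fun a => by
                simpa [smul_eq_mul, mul_assoc, mul_comm, mul_left_comm] using hx.2 (c * a)⟩ },
        rfl, ?_⟩
  -- finite codimension
  obtain ⟨n, v, hv⟩ := Module.Finite.exists_fin (R := K) (M := A ⧸ Z)
  choose a ha using fun i => Z.mkQ_surjective (v i)
  set Φ : A →ₗ[K] (A ⧸ Z) × (Fin n → A ⧸ Z) :=
    LinearMap.prod Z.mkQ (LinearMap.pi fun i => Z.mkQ ∘ₗ LinearMap.mulRight K (a i)) with hΦ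
  have key : ∀ f : A, f ∈ LinearMap.ker Φ ↔ (f ∈ Z ∧ ∀ x : A, f * x ∈ Z) := by
    intro f
    rw [LinearMap.mem_ker]
    constructor
    · intro hf
      have h0 : Z.mkQ f = 0 := congrArg Prod.fst hf
      have h1 : ∀ i, Z.mkQ (f * a i) = 0 := fun i => congrFun (congrArg Prod.snd hf) i
      have h0' : f ∈ Z := by simpa using h0
      have h1' : ∀ i, f * a i ∈ Z := fun i => by simpa using h1 i
      refine ⟨h0', fun x => ?_⟩
      set T : Submodule K A :=
        { carrier := {x : A | f * x ∈ Z}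
          zero_mem' := by simp [Z.zero_mem]
          add_mem' := fun {p q} hp hq => by
            simp only [Set.mem_setOf_eq, mul_add] at *
            exact Z.add_mem hp hq
          smul_mem' := fun c {p} hp => by
            simp only [Set.mem_setOf_eq] at *
            rw [mul_smul_comm]
            exact Z.smul_mem c hp } with hT
      have hZT : Z ≤ T := fun z hz => hmul f h0' z hz
      have hmap : Submodule.map Z.mkQ T = ⊤ := by
        rw [eq_top_iff, ← hv, Submodule.span_le]
        rintro _ ⟨i, rfl⟩
        exact Submodule.mem_map.2 ⟨a i, h1' i, ha i⟩
      have hTtop : T = ⊤ := by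
        have h := congrArg (Submodule.comap Z.mkQ) hmap
        rwa [Submodule.comap_map_eq, Z.ker_mkQ, sup_of_le_left hZT, Submodule.comap_top] at h
      have hx : x ∈ T := hTtop ▸ Submodule.mem_top
      exact hx
    · rintro ⟨h0, h1⟩
      refine Prod.ext ?_ (funext fun i => ?_)
      · simpa [hΦ] using (Submodule.Quotient.mk_eq_zero Z).mpr h0
      · simpa [hΦ] using (Submodule.Quotient.mk_eq_zero Z).mpr (h1 (a i))
  have hker : (LinearMap.ker Φ) =
      Submodule.restrictScalars K
        ({ carrier := {f : A | f ∈ Z ∧ ∀ a : A, f * a ∈ Z}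
           zero_mem' := ⟨Z.zero_mem, fun a => by simp [Z.zero_mem]⟩
           add_mem' := fun {x y} hx hy =>
             ⟨Z.add_mem hx.1 hy.1, fun a => by
               rw [add_mul]; exact Z.add_mem (hx.2 a) (hy.2 a)⟩
           smul_mem' := fun c {x} hx =>
             ⟨by simpa [mul_comm] using hx.2 c, fun a => by
               simpa [smul_eq_mul, mul_assoc, mul_comm, mul_left_comm] using hx.2 (c * a)⟩ } :
          Ideal A) := by
    ext f
    exact key f
  rw [← hker]
  have : FiniteDimensional K ((A ⧸ Z) × (Fin n → A ⧸ Z)) := by infer_instance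
  have : FiniteDimensional K (LinearMap.range Φ) := by infer_instance
  exact FiniteDimensional.of_injective (Φ.quotKerEquivRange).toLinearMap
    (Φ.quotKerEquivRange).injective
end

section
/- The direct sum (product) of a quasi-finite Lie algebra and a finite-dimensional Lie algebra is quasi-finite. -/
section ProdLie

variable {L M : Type*} [LieRing L] [LieRing M]

/-- Componentwise bracket on the product. -/
instance prodBracket : Bracket (L × M) (L × M) :=
  ⟨fun x y => (⁅x.1, y.1⁆, ⁅x.2, y.2⁆)⟩

@[simp] theorem prod_bracket_fst (x y : L × M) : ⁅x, y⁆.1 = ⁅x.1, y.1⁆ := rfl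
@[simp] theorem prod_bracket_snd (x y : L × M) : ⁅x, y⁆.2 = ⁅x.2, y.2⁆ := rfl

/-- The direct sum (product) of two Lie rings, with componentwise bracket. -/
instance prodLieRing : LieRing (L × M) where
  add_lie x y z := by ext <;> simp
  lie_add x y z := by ext <;> simp
  lie_self x := by ext <;> simp
  leibniz_lie x y z := by ext <;> simp

/-- The direct sum (product) of two Lie algebras over `K`. -/
instance prodLieAlgebra {K : Type*} [CommRing K] [LieAlgebra K L] [LieAlgebra K M] :
    LieAlgebra K (L × M) where
  lie_smul t x y := by ext <;> simp

end ProdLie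

/-- The direct sum of a quasi-finite Lie algebra and a finite-dimensional Lie
algebra is quasi-finite. -/
theorem quasiFinite_prod_finiteDimensional
    (K : Type*) [Field K]
    (g : Type*) [LieRing g] [LieAlgebra K g]
    (n : Type*) [LieRing n] [LieAlgebra K n] [FiniteDimensional K n]
    (hg : QuasiFinite K g) :
    QuasiFinite K (g × n) := by
  intro h hfin
  -- the pullback subalgebra in g
  let h₁ : LieSubalgebra K g :=
    { carrier := {x : g | ((x, 0) : g × n) ∈ h}
      add_mem' := fun {a b} ha hb => by
        have := h.add_mem ha hb
        simpa using this
      zero_mem' := h.zero_mem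
      smul_mem' := fun c a ha => by
        have := h.smul_mem c ha
        simpa using this
      lie_mem' := fun {a b} ha hb => by
        have := h.lie_mem ha hb
        have he : (⁅((a,0) : g × n), ((b,0) : g × n)⁆) = ((⁅a,b⁆, 0) : g × n) := by
          ext <;> simp
        rwa [he] at this }
  have hmem₁ : ∀ x : g, x ∈ h₁ ↔ ((x, 0) : g × n) ∈ h := fun x => Iff.rfl
  have hsub : h₁.toSubmodule = (h.toSubmodule).comap (LinearMap.inl K g n) := by
    ext x; simp [hmem₁]
  have hfin₁ : FiniteDimensional K (g ⧸ h₁.toSubmodule) := by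
    let f : g ⧸ h₁.toSubmodule →ₗ[K] (g × n) ⧸ h.toSubmodule :=
      Submodule.mapQ _ _ (LinearMap.inl K g n) (le_of_eq hsub)
    have hinj : Function.Injective f := by
      rw [← LinearMap.ker_eq_bot]
      apply Submodule.ker_liftQ_eq_bot'
      rw [hsub, LinearMap.ker_comp, Submodule.ker_mkQ]
    exact FiniteDimensional.of_injective f hinj
  obtain ⟨I, hIh, hIfin⟩ := hg h₁ hfin₁
  -- the ideal I × 0 in g × n
  let J : LieIdeal K (g × n) :=
    { toSubmodule := (I : LieSubmodule K g g).toSubmodule.map (LinearMap.inl K g n)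
      lie_mem := by
        rintro x m hm
        rw [Submodule.map_inl] at hm ⊢
        refine ⟨?_, ?_⟩
        · exact (I : LieSubmodule K g g).lie_mem hm.1
        · have h2 : m.2 = 0 := by simpa using hm.2
          simp [h2] }
  refine ⟨J, ?_, ?_⟩
  · rintro x hx
    rcases hx with ⟨i, hi, rfl⟩
    exact hIh i hi
  · -- quotient of g × n by J is finite dimensional
    let φ : (g × n) →ₗ[K] (g ⧸ (I : LieSubmodule K g g).toSubmodule) × n :=
      LinearMap.prodMap ((I : LieSubmodule K g g).toSubmodule.mkQ) LinearMap.id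
    have hker : (J : LieSubmodule K (g × n) (g × n)).toSubmodule = LinearMap.ker φ := by
      show (I : LieSubmodule K g g).toSubmodule.map (LinearMap.inl K g n) = _
      rw [Submodule.map_inl, LinearMap.ker_prodMap, Submodule.ker_mkQ, LinearMap.ker_id]
    rw [hker]
    have hsurj : Function.Surjective φ := by
      rintro ⟨x, m⟩
      obtain ⟨y, rfl⟩ := Submodule.mkQ_surjective _ x
      exact ⟨(y, m), rfl⟩
    have e := φ.quotKerEquivOfSurjective hsurj
    exact Module.Finite.equiv e.symm
end

section
/- Let L be a Lie algebra over a field of characteristic zero, let a, b ∈ L, and let n ≥ 1. Suppose that [(ad a)^k(b), (ad a)^l(b)] = 0 for all k, l ∈ ℕ with k + l ≤ 2n − 1. Then [(ad a)^k(b), (ad a)^l(b)] = 0 for all k, l ∈ ℕ with k + l = 2n. -/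
/-- If `[(ad a)^k b, (ad a)^l b] = 0` for all `k + l ≤ 2n − 1` (with `n ≥ 1`), then
`[(ad a)^k b, (ad a)^l b] = 0` for all `k + l = 2n`. -/
theorem bracket_ad_pow_eq_zero_of_le
    (K : Type*) [Field K] [CharZero K]
    (L : Type*) [LieRing L] [LieAlgebra K L]
    (a b : L) (n : ℕ) (hn : 1 ≤ n)
    (H : ∀ k l : ℕ, k + l ≤ 2 * n - 1 →
      ⁅((LieAlgebra.ad K L a : Module.End K L) ^ k) b,
        ((LieAlgebra.ad K L a : Module.End K L) ^ l) b⁆ = 0) :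
    ∀ k l : ℕ, k + l = 2 * n →
      ⁅((LieAlgebra.ad K L a : Module.End K L) ^ k) b,
        ((LieAlgebra.ad K L a : Module.End K L) ^ l) b⁆ = 0 := by
  set A : Module.End K L := (LieAlgebra.ad K L a : Module.End K L) with hA
  set P : ℕ → L := fun m => ⁅(A ^ m) b, (A ^ (2 * n - m)) b⁆ with hP
  have had : ∀ j : ℕ, ⁅a, (A ^ j) b⁆ = (A ^ (j + 1)) b := by
    intro j; rw [pow_succ']; rfl
  have hstep : ∀ m : ℕ, m + 1 ≤ 2 * n → P (m + 1) = -P m := by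
    intro m hm
    have h0 : ⁅(A ^ m) b, (A ^ (2 * n - 1 - m)) b⁆ = 0 := H m (2 * n - 1 - m) (by omega)
    have h1 : ⁅a, ⁅(A ^ m) b, (A ^ (2 * n - 1 - m)) b⁆⁆ = 0 := by rw [h0, lie_zero]
    rw [leibniz_lie, had, had] at h1
    have e1 : 2 * n - 1 - m + 1 = 2 * n - m := by omega
    have e2 : 2 * n - 1 - m = 2 * n - (m + 1) := by omega
    rw [e1, e2] at h1
    simp only [hP]
    exact eq_neg_of_add_eq_zero_left h1
  have hind : ∀ m : ℕ, m ≤ 2 * n → P m = ((-1 : ℤ) ^ m) • P 0 := by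
    intro m
    induction m with
    | zero => intro _; simp
    | succ m ih =>
      intro hm
      rw [hstep m hm, ih (by omega), pow_succ]
      simp [neg_smul]
  have hPn : P n = 0 := by
    simp only [hP]
    have : 2 * n - n = n := by omega
    rw [this, lie_self]
  have hP0 : P 0 = 0 := by
    have h := hPn
    rw [hind n (by omega)] at h
    have h2 := congrArg (fun x => ((-1 : ℤ) ^ n) • x) h
    simpa [smul_smul, ← pow_add, Even.neg_one_pow (⟨n, rfl⟩ : Even (n + n))] using h2
  intro k l hkl
  have hl : l = 2 * n - k := by omega
  have : ⁅(A ^ k) b, (A ^ l) b⁆ = P k := by rw [hP, hl]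
  rw [this, hind k (by omega), hP0, smul_zero]
end

section
/- Let L be a Lie algebra, let x, y ∈ L, and suppose [(ad x)^k(y), (ad x)^l(y)] = 0 for all k, l ∈ ℕ. Then the Lie subalgebra of L generated by {x, y} is solvable; in fact its derived subalgebra is abelian. -/
/-!
Write `c k = (ad x)^k y`. Since `⁅x, c k⁆ = c (k + 1)` and the `c k` commute pairwise, every
bracket of two elements of `span {x, c 0, c 1, …}` lies in the abelian subspace `span {c k}`.
So this span is a Lie subalgebra containing `x` and `y = c 0`, hence containing the Lie
subalgebra they generate, whose derived algebra therefore sits inside an abelian subspace.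
-/

namespace LieAlgebra

open Submodule

variable {R L : Type*} [CommRing R] [LieRing L] [LieAlgebra R L]

theorem lie_mem_of_mem_span_of_mem_span {s t : Set L} {p : Submodule R L}
    (h : ∀ a ∈ s, ∀ b ∈ t, ⁅a, b⁆ ∈ p) {a b : L} (ha : a ∈ span R s) (hb : b ∈ span R t) :
    ⁅a, b⁆ ∈ p := by
  have hle : map₂ (ad R L : L →ₗ[R] Module.End R L) (span R s) (span R t) ≤ p := by
    rw [map₂_span_span, span_le]
    rintro _ ⟨a, ha, b, hb, rfl⟩
    exact h a ha b hb
  exact map₂_le.mp hle a ha b hb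

variable (R) in
theorem isSolvable_of_isLieAbelian_derivedSeries_one [IsLieAbelian (derivedSeries R L 1)] :
    IsSolvable L :=
  (isSolvable_iff R L).mpr ⟨2, (abelian_iff_derived_succ_eq_bot ⊤ 1).mp ‹_›⟩

theorem isLieAbelian_derivedSeries_one_of_lie_mem {S : LieSubalgebra R L} {C : Submodule R L}
    (hC : ∀ a ∈ C, ∀ b ∈ C, ⁅a, b⁆ = 0) (hS : ∀ a ∈ S, ∀ b ∈ S, ⁅a, b⁆ ∈ C) :
    IsLieAbelian (derivedSeries R S 1) := by
  have hD : (derivedSeries R S 1 : Submodule R S) ≤ C.comap S.toSubmodule.subtype := by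
    rw [coe_derivedSeries_one_eq, span_le]
    rintro _ ⟨a, b, rfl⟩
    exact hS _ a.2 _ b.2
  exact ⟨fun a b => Subtype.ext <| Subtype.ext <| hC _ (hD a.2) _ (hD b.2)⟩

section AdPow

variable {x y : L}

theorem lie_ad_pow_apply (k : ℕ) : ⁅x, (ad R L x ^ k) y⁆ = (ad R L x ^ (k + 1)) y := by
  rw [pow_succ', Module.End.mul_apply, ad_apply]

variable (H : ∀ k l : ℕ, ⁅(ad R L x ^ k) y, (ad R L x ^ l) y⁆ = 0)
include H

theorem lie_eq_zero_of_mem_span_ad_pow :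
    ∀ a ∈ span R (Set.range fun k => (ad R L x ^ k) y),
      ∀ b ∈ span R (Set.range fun k => (ad R L x ^ k) y), ⁅a, b⁆ = 0 := fun a ha b hb => by
  refine (mem_bot R).mp (lie_mem_of_mem_span_of_mem_span ?_ ha hb)
  rintro _ ⟨k, rfl⟩ _ ⟨l, rfl⟩
  rw [H k l]
  exact zero_mem _

theorem lie_mem_span_ad_pow_of_mem_span_insert {a b : L}
    (ha : a ∈ span R (insert x (Set.range fun k => (ad R L x ^ k) y)))
    (hb : b ∈ span R (insert x (Set.range fun k => (ad R L x ^ k) y))) :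
    ⁅a, b⁆ ∈ span R (Set.range fun k => (ad R L x ^ k) y) := by
  refine lie_mem_of_mem_span_of_mem_span ?_ ha hb
  rintro _ (rfl | ⟨k, rfl⟩) _ (rfl | ⟨l, rfl⟩)
  · rw [lie_self]
    exact zero_mem _
  · rw [lie_ad_pow_apply]
    exact subset_span ⟨l + 1, rfl⟩
  · rw [← lie_skew, lie_ad_pow_apply]
    exact neg_mem (subset_span ⟨k + 1, rfl⟩)
  · rw [H k l]
    exact zero_mem _

theorem mem_span_ad_pow_of_mem_lieSpan {z : L} (hz : z ∈ LieSubalgebra.lieSpan R L {x, y}) :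
    z ∈ span R (insert x (Set.range fun k => (ad R L x ^ k) y)) := by
  induction hz using LieSubalgebra.lieSpan_induction with
  | mem z hz =>
    rcases hz with rfl | rfl
    · exact subset_span (Set.mem_insert _ _)
    · exact subset_span (Set.mem_insert_of_mem _ ⟨0, by simp⟩)
  | zero => exact zero_mem _
  | add _ _ _ _ ha hb => exact add_mem ha hb
  | smul t _ _ ha => exact smul_mem _ t ha
  | lie _ _ _ _ ha hb =>
    exact span_mono (Set.subset_insert _ _) (lie_mem_span_ad_pow_of_mem_span_insert H ha hb)

end AdPow

end LieAlgebra

/-- If all the elements `(ad x)^k y` commute pairwise, then the Lie subalgebra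
generated by `{x, y}` is solvable; in fact its derived subalgebra is abelian. -/
theorem solvable_of_ad_pow_commute
    (K : Type*) [Field K]
    (L : Type*) [LieRing L] [LieAlgebra K L]
    (x y : L)
    (H : ∀ k l : ℕ,
      ⁅((LieAlgebra.ad K L x : Module.End K L) ^ k) y,
        ((LieAlgebra.ad K L x : Module.End K L) ^ l) y⁆ = 0) :
    LieAlgebra.IsSolvable (LieSubalgebra.lieSpan K L {x, y}) ∧
    IsLieAbelian
      (LieAlgebra.derivedSeries K (LieSubalgebra.lieSpan K L {x, y}) 1) := by
  have hLie : ∀ a ∈ LieSubalgebra.lieSpan K L {x, y}, ∀ b ∈ LieSubalgebra.lieSpan K L {x, y},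
      ⁅a, b⁆ ∈ Submodule.span K (Set.range fun k => (LieAlgebra.ad K L x ^ k) y) :=
    fun _ ha _ hb => LieAlgebra.lie_mem_span_ad_pow_of_mem_span_insert H
      (LieAlgebra.mem_span_ad_pow_of_mem_lieSpan H ha)
      (LieAlgebra.mem_span_ad_pow_of_mem_lieSpan H hb)
  have hAbelian := LieAlgebra.isLieAbelian_derivedSeries_one_of_lie_mem
    (LieAlgebra.lie_eq_zero_of_mem_span_ad_pow H) hLie
  exact ⟨LieAlgebra.isSolvable_of_isLieAbelian_derivedSeries_one K, hAbelian⟩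
end

section
/- Let g be a finite-dimensional semisimple Lie algebra over ℂ and suppose the Lie algebra g₁ is a one-dimensional central extension of the Lie algebra g₂, i.e. there is a surjective homomorphism π : g₁ → g₂ with one-dimensional central kernel. Then there exists a subalgebra h₁ ⊆ g₁ of finite codimension and a surjective homomorphism h₁ → g if and only if there exists a subalgebra h₂ ⊆ g₂ of finite codimension and a surjective homomorphism h₂ → g. -/
/-!
Pushing forward along `π` and pulling back along `π` both preserve finite codimension. A surjection
`h₂ → g` composed with the surjection `π⁻¹(h₂) → h₂` gives one direction. Conversely, a surjection
`f : h₁ → g` kills `h₁ ∩ ker π`: this ideal is central, `f` maps central elements to central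
elements, and `g` has trivial centre. Hence `f` factors through `h₁ → π(h₁)`.
-/

namespace Submodule

variable {R M M₂ : Type*} [Ring R] [AddCommGroup M] [Module R M] [AddCommGroup M₂] [Module R M₂]

theorem finite_quotient_map_of_surjective {f : M →ₗ[R] M₂} (hf : Function.Surjective f)
    (p : Submodule R M) [Module.Finite R (M ⧸ p)] : Module.Finite R (M₂ ⧸ p.map f) := by
  refine Module.Finite.of_surjective (p.mapQ _ f (le_comap_map f p)) ?_
  refine Function.Surjective.of_comp (g := p.mkQ) ?_
  rw [← LinearMap.coe_comp, mapQ_mkQ, LinearMap.coe_comp]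
  exact (mkQ_surjective _).comp hf

theorem finite_quotient_comap [IsNoetherianRing R] (f : M →ₗ[R] M₂) (q : Submodule R M₂)
    [Module.Finite R (M₂ ⧸ q)] : Module.Finite R (M ⧸ q.comap f) := by
  refine Module.Finite.of_injective ((q.comap f).mapQ q f le_rfl) ?_
  rw [← LinearMap.ker_eq_bot, ker_mapQ, mkQ_map_self]

end Submodule

namespace LieHom

variable {R L L₂ M : Type*} [CommRing R] [LieRing L] [LieAlgebra R L] [LieRing L₂]
  [LieAlgebra R L₂] [LieRing M] [LieAlgebra R M]

def subalgebraMap (f : L →ₗ⁅R⁆ L₂) (K : LieSubalgebra R L) : K →ₗ⁅R⁆ K.map f :=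
  { (f : L →ₗ[R] L₂).submoduleMap K.toSubmodule with
    map_lie' := fun {_ _} ↦ Subtype.ext (f.map_lie _ _) }

theorem subalgebraMap_surjective (f : L →ₗ⁅R⁆ L₂) (K : LieSubalgebra R L) :
    Function.Surjective (f.subalgebraMap K) :=
  (f : L →ₗ[R] L₂).submoduleMap_surjective K.toSubmodule

def subalgebraComap (f : L →ₗ⁅R⁆ L₂) (K : LieSubalgebra R L₂) : K.comap f →ₗ⁅R⁆ K :=
  { (f : L →ₗ[R] L₂).submoduleComap K.toSubmodule with
    map_lie' := fun {_ _} ↦ Subtype.ext (f.map_lie _ _) }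

theorem subalgebraComap_surjective_of_surjective {f : L →ₗ⁅R⁆ L₂} (hf : Function.Surjective f)
    (K : LieSubalgebra R L₂) : Function.Surjective (f.subalgebraComap K) :=
  (f : L →ₗ[R] L₂).submoduleComap_surjective_of_surjective K.toSubmodule hf

noncomputable def liftOfSurjective (p : L →ₗ⁅R⁆ L₂) (hp : Function.Surjective p)
    (f : L →ₗ⁅R⁆ M) (hpf : p.ker ≤ f.ker) : L₂ →ₗ⁅R⁆ M where
  toLinearMap := (LinearMap.ker (p : L →ₗ[R] L₂)).liftQ (f : L →ₗ[R] M) hpf ∘ₗ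
    ((p : L →ₗ[R] L₂).quotKerEquivOfSurjective hp).symm.toLinearMap
  map_lie' {y z} := by
    have lift_apply (x : L) : (LinearMap.ker (p : L →ₗ[R] L₂)).liftQ (f : L →ₗ[R] M) hpf
        (((p : L →ₗ[R] L₂).quotKerEquivOfSurjective hp).symm (p x)) = f x := by
      rw [← coe_toLinearMap p, LinearMap.quotKerEquivOfSurjective_symm_apply]
      exact Submodule.liftQ_apply _ _ _
    obtain ⟨a, rfl⟩ := hp y
    obtain ⟨b, rfl⟩ := hp z
    simp only [← p.map_lie, AddHom.toFun_eq_coe, LinearMap.coe_toAddHom, LinearMap.comp_apply,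
      LinearEquiv.coe_coe, lift_apply, f.map_lie]

theorem liftOfSurjective_apply (p : L →ₗ⁅R⁆ L₂) (hp : Function.Surjective p)
    (f : L →ₗ⁅R⁆ M) (hpf : p.ker ≤ f.ker) (x : L) :
    p.liftOfSurjective hp f hpf (p x) = f x := by
  show (LinearMap.ker (p : L →ₗ[R] L₂)).liftQ (f : L →ₗ[R] M) hpf
    (((p : L →ₗ[R] L₂).quotKerEquivOfSurjective hp).symm (p x)) = f x
  rw [← coe_toLinearMap p, LinearMap.quotKerEquivOfSurjective_symm_apply]
  exact Submodule.liftQ_apply _ _ _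

theorem liftOfSurjective_surjective {p : L →ₗ⁅R⁆ L₂} (hp : Function.Surjective p)
    {f : L →ₗ⁅R⁆ M} (hf : Function.Surjective f) (hpf : p.ker ≤ f.ker) :
    Function.Surjective (p.liftOfSurjective hp f hpf) :=
  Function.Surjective.of_comp (g := p) <| by
    simpa only [Function.comp_def, liftOfSurjective_apply] using hf

theorem center_le_ker_of_surjective {f : L →ₗ⁅R⁆ M} (hf : Function.Surjective f)
    (hM : LieAlgebra.center R M = ⊥) : LieAlgebra.center R L ≤ f.ker := by
  intro x hx
  suffices f x ∈ LieAlgebra.center R M by rwa [hM, LieSubmodule.mem_bot] at this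
  rw [LieModule.mem_maxTrivSubmodule] at hx ⊢
  intro y
  obtain ⟨z, rfl⟩ := hf y
  rw [← f.map_lie, hx, map_zero]

theorem ker_subalgebraMap_le_center (π : L →ₗ⁅R⁆ L₂) (hπ : π.ker ≤ LieAlgebra.center R L)
    (K : LieSubalgebra R L) : (π.subalgebraMap K).ker ≤ LieAlgebra.center R K := by
  intro x hx
  have hx_center : (x : L) ∈ LieAlgebra.center R L :=
    hπ (congrArg Subtype.val ((π.subalgebraMap K).mem_ker.mp hx))
  rw [LieModule.mem_maxTrivSubmodule] at hx_center ⊢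
  exact fun y ↦ Subtype.ext (hx_center y)

theorem exists_surjective_of_ker_le_center (π : L →ₗ⁅R⁆ L₂)
    (hπ : π.ker ≤ LieAlgebra.center R L) (hM : LieAlgebra.center R M = ⊥)
    {K : LieSubalgebra R L} {f : K →ₗ⁅R⁆ M} (hf : Function.Surjective f) :
    ∃ f' : K.map π →ₗ⁅R⁆ M, Function.Surjective f' :=
  ⟨_, liftOfSurjective_surjective (π.subalgebraMap_surjective K) hf
    ((π.ker_subalgebraMap_le_center hπ K).trans (center_le_ker_of_surjective hf hM))⟩

end LieHom

theorem central_extension_subalgebra_surjection_iff_general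
    (g : Type*) [LieRing g] [LieAlgebra ℂ g]
    [LieAlgebra.IsSemisimple ℂ g]
    (g₁ : Type*) [LieRing g₁] [LieAlgebra ℂ g₁]
    (g₂ : Type*) [LieRing g₂] [LieAlgebra ℂ g₂]
    (π : g₁ →ₗ⁅ℂ⁆ g₂) (hsurj : Function.Surjective π)
    (hcentral : ∀ x ∈ π.ker, ∀ y : g₁, ⁅x, y⁆ = 0) :
    (∃ h₁ : LieSubalgebra ℂ g₁, FiniteDimensional ℂ (g₁ ⧸ h₁.toSubmodule) ∧
        ∃ f : h₁ →ₗ⁅ℂ⁆ g, Function.Surjective f) ↔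
    (∃ h₂ : LieSubalgebra ℂ g₂, FiniteDimensional ℂ (g₂ ⧸ h₂.toSubmodule) ∧
        ∃ f : h₂ →ₗ⁅ℂ⁆ g, Function.Surjective f) := by
  have hker : π.ker ≤ LieAlgebra.center ℂ g₁ := fun x hx ↦
    (LieModule.mem_maxTrivSubmodule ℂ g₁ g₁ x).mpr fun y ↦ by
      rw [← lie_skew, hcentral x hx y, neg_zero]
  constructor
  · rintro ⟨h₁, hfin, f, hf⟩
    exact ⟨h₁.map π, Submodule.finite_quotient_map_of_surjective hsurj _,
      π.exists_surjective_of_ker_le_center hker (LieAlgebra.center_eq_bot ℂ g) hf⟩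
  · rintro ⟨h₂, hfin, f, hf⟩
    exact ⟨h₂.comap π, Submodule.finite_quotient_comap _ _,
      f.comp (π.subalgebraComap h₂), hf.comp (π.subalgebraComap_surjective_of_surjective hsurj h₂)⟩

/-- Let `g` be a finite-dimensional semisimple complex Lie algebra and let `g₁` be a
one-dimensional central extension of `g₂`.  Then `g₁` has a subalgebra of finite
codimension surjecting onto `g` if and only if `g₂` does. -/
theorem central_extension_subalgebra_surjection_iff
    (g : Type*) [LieRing g] [LieAlgebra ℂ g]
    [FiniteDimensional ℂ g] [LieAlgebra.IsSemisimple ℂ g]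
    (g₁ : Type*) [LieRing g₁] [LieAlgebra ℂ g₁]
    (g₂ : Type*) [LieRing g₂] [LieAlgebra ℂ g₂]
    (π : g₁ →ₗ⁅ℂ⁆ g₂) (hsurj : Function.Surjective π)
    (hcentral : ∀ x ∈ π.ker, ∀ y : g₁, ⁅x, y⁆ = 0)
    (hdim : Module.finrank ℂ π.ker = 1) :
    (∃ h₁ : LieSubalgebra ℂ g₁, FiniteDimensional ℂ (g₁ ⧸ h₁.toSubmodule) ∧
        ∃ f : h₁ →ₗ⁅ℂ⁆ g, Function.Surjective f) ↔
    (∃ h₂ : LieSubalgebra ℂ g₂, FiniteDimensional ℂ (g₂ ⧸ h₂.toSubmodule) ∧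
        ∃ f : h₂ →ₗ⁅ℂ⁆ g, Function.Surjective f) :=
  central_extension_subalgebra_surjection_iff_general g g₁ g₂ π hsurj hcentral
end
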